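/- Let E_U be an MFCE-relation on 𝔄 = 𝔄(I), define Ẽ_U by a Ẽ_U b iff a = b or (a E_U b and the E_U-class of a contains a ghost), let w : I →₀ ℕ be a monomial with exponents r_i := w(i), and set E_w := Ẽ_U ∨ ⋁_{i∈I} Eq(x_i^{r_i+1}, c^{r_i+1}) (where x_i^{r_i+1} denotes the monomial with exponent r_i+1 at i and 0 elsewhere, and c^{r_i+1} = e·x_i^{r_i+1}). Then: (1) the ⋁_{i∈I} Eq(x_i^{r_i+1}, c^{r_i+1})-classes containing no ghost are exactly the singletons {z} for monomials z ≤ w, so the quotient A_w has exactly ∏_{i∈supp w}(r_i+1) tangible elements; (2) the E_w-classes containing no ghost are exactly the singletons {z} for monomials z with z ≤ w whose E_U-class contains no ghost; in particular the quotient U_w := 𝔄/E_w has finitely many tangible elements and has unique tangible factorization. -/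

import Mathlib

/-- The supertropical monoid `𝔄(I)` over `M = {cᵏ : k ∈ ℕ} ∪ {0}`: its tangible
elements are the monomials in commuting variables `(x_i)_{i ∈ I}`, identified with
finitely supported exponent vectors `I →₀ ℕ`; its ghosts are `gh k = cᵏ` and
`zero`. -/
inductive STA (I : Type) : Type where
  | tang : (I →₀ ℕ) → STA I
  | gh : ℕ → STA I
  | zero : STA I

namespace STA

variable {I : Type}

/-- The degree of a monomial. -/
def deg (z : I →₀ ℕ) : ℕ := z.sum fun _ n => n

/-- Multiplication in `𝔄(I)`: monomials multiply among themselves,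
`cᵏ · z = c^(k + deg z)`, ghosts multiply in `M`, and `0` is absorbing. -/
noncomputable def mul : STA I → STA I → STA I
  | zero, _ => zero
  | _, zero => zero
  | tang z, tang w => tang (z + w)
  | tang z, gh k => gh (deg z + k)
  | gh k, tang w => gh (k + deg w)
  | gh k, gh l => gh (k + l)

/-- The ghost elements of `𝔄(I)` (the elements of `M`). -/
def isGhost : STA I → Prop
  | tang _ => False
  | gh _ => True
  | zero => True

/-- The ghost map `a ↦ e·a` (`e = gh 0 = c⁰`). -/
noncomputable def nu : STA I → STA I := fun a => mul (gh 0) a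

/-- A relation is multiplicative. -/
def Mult (E : STA I → STA I → Prop) : Prop :=
  ∀ a b d : STA I, E a b → E (mul a d) (mul b d)

/-- An MFCE-relation on `𝔄(I)`: a multiplicative, fiber conserving equivalence
relation. -/
def MFCE (E : STA I → STA I → Prop) : Prop :=
  Equivalence E ∧ Mult E ∧ ∀ a b : STA I, E a b → nu a = nu b

/-- The smallest multiplicative equivalence relation containing `R`; for `R`
relating the elements of a set `S` (of equal ghost value) this is `Eq(S)`, and
applied to unions it yields joins `⋁` in the lattice of MFCE-relations. -/
def mgen (R : STA I → STA I → Prop) : STA I → STA I → Prop :=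
  fun a b => ∀ E : STA I → STA I → Prop,
    Equivalence E → Mult E → (∀ x y : STA I, R x y → E x y) → E a b

/-- The `E`-class of `a` contains no ghost (i.e. is a tangible class). -/
def GhostFree (E : STA I → STA I → Prop) (a : STA I) : Prop :=
  ¬ ∃ g : STA I, isGhost g ∧ E a g

/-- The relation `Ẽ_U`: `a Ẽ_U b` iff `a = b`, or `a E_U b` and the `E_U`-class of
`a` contains a ghost. -/
def tilde (EU : STA I → STA I → Prop) : STA I → STA I → Prop :=
  fun a b => a = b ∨ (EU a b ∧ ¬ GhostFree EU a)

end STA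

/-!
For a predicate `good` on `𝔄(I)` that is closed under taking divisors, the relation
identifying, within each ghost fiber, all elements outside `good` is an MFCE-relation in which
every good element is a singleton class. Whenever the generators of a relation lie inside it,
so does the relation they generate; and if moreover every bad monomial is linked to a ghost,
the ghost-free classes are exactly the good elements. For `F_w` take the monomials `z ≤ w`: a
monomial `z ≰ w` is divisible by some `x_i^{w_i+1}`, hence linked to a ghost. For `E_w` take the
monomials `z ≤ w` with ghost-free `E_U`-class: the remaining ones are linked to a ghost through
`Ẽ_U`. The count is `#[0, w] = ∏ (w_i + 1)`.
-/

namespace STA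

variable {I : Type}

lemma deg_add (z z' : I →₀ ℕ) : deg (z + z') = deg z + deg z' :=
  Finsupp.sum_add_index' (fun _ => rfl) (fun _ _ _ => rfl)

lemma deg_single (i : I) (n : ℕ) : deg (Finsupp.single i n) = n :=
  Finsupp.sum_single_index rfl

lemma nu_mul (a d : STA I) : nu (mul a d) = mul (nu a) (nu d) := by
  cases a <;> cases d <;> simp [mul, nu, deg_add]

lemma isGhost_mul {g : STA I} (hg : isGhost g) (d : STA I) : isGhost (mul g d) := by
  cases g <;> cases d <;> simp_all [isGhost, mul]

lemma exists_tang_of_mul_eq_tang {a d : STA I} {u : I →₀ ℕ} (h : mul a d = tang u) :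
    ∃ z z' : I →₀ ℕ, a = tang z ∧ d = tang z' ∧ z + z' = u := by
  cases a <;> cases d <;> simp_all [mul]

lemma tang_injective : Function.Injective (tang (I := I)) :=
  fun _ _ h => tang.inj h

lemma ghostFree_of_ghostFree_mul {E : STA I → STA I → Prop} (hE : Mult E) {a : STA I}
    (d : STA I) (h : GhostFree E (mul a d)) : GhostFree E a := by
  rintro ⟨g, hg, hag⟩
  exact h ⟨mul g d, isGhost_mul hg d, hE a g d hag⟩

section mgen

variable {R : STA I → STA I → Prop}

lemma mgen_of {a b : STA I} (h : R a b) : mgen R a b :=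
  fun _ _ _ hR => hR _ _ h

lemma mgen_refl (a : STA I) : mgen R a a :=
  fun _ hE _ _ => hE.refl a

lemma mgen_mult : Mult (mgen R) :=
  fun a b d h E hE hm hR => hm a b d (h E hE hm hR)

lemma mgen_le {E : STA I → STA I → Prop} (hE : Equivalence E) (hm : Mult E)
    (hR : ∀ x y, R x y → E x y) {a b : STA I} (h : mgen R a b) : E a b :=
  h E hE hm hR

end mgen

def fiberCollapse (good : STA I → Prop) (a b : STA I) : Prop :=
  a = b ∨ (nu a = nu b ∧ ¬ good a ∧ ¬ good b)

section fiberCollapse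

variable {good : STA I → Prop}

lemma fiberCollapse_equivalence (good : STA I → Prop) : Equivalence (fiberCollapse good) where
  refl _ := Or.inl rfl
  symm := by
    rintro a b (rfl | ⟨hab, ha, hb⟩)
    · exact Or.inl rfl
    · exact Or.inr ⟨hab.symm, hb, ha⟩
  trans := by
    rintro a b c (rfl | ⟨hab, ha, hb⟩) hbc
    · exact hbc
    · rcases hbc with rfl | ⟨hbc, -, hc⟩
      · exact Or.inr ⟨hab, ha, hb⟩
      · exact Or.inr ⟨hab.trans hbc, ha, hc⟩

lemma fiberCollapse_mult (hdvd : ∀ a d : STA I, good (mul a d) → good a) :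
    Mult (fiberCollapse good) := by
  rintro a b d (rfl | ⟨hab, ha, hb⟩)
  · exact Or.inl rfl
  · exact Or.inr ⟨by rw [nu_mul, nu_mul, hab], fun h => ha (hdvd a d h),
      fun h => hb (hdvd b d h)⟩

lemma fiberCollapse_mono {good' : STA I → Prop} (h : ∀ a, good' a → good a) {a b : STA I}
    (hab : fiberCollapse good a b) : fiberCollapse good' a b :=
  hab.imp_right fun ⟨hν, ha, hb⟩ => ⟨hν, mt (h a) ha, mt (h b) hb⟩

lemma fiberCollapse_of_tilde {EU : STA I → STA I → Prop} (hEU : MFCE EU)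
    (hgood : ∀ a, good a → GhostFree EU a) {a b : STA I} (hab : tilde EU a b) :
    fiberCollapse good a b := by
  rcases hab with rfl | ⟨hab, ha⟩
  · exact Or.inl rfl
  · obtain ⟨g, hg, hag⟩ := not_not.1 ha
    have hb : ¬ GhostFree EU b := fun hb => hb ⟨g, hg, hEU.1.trans (hEU.1.symm hab) hag⟩
    exact Or.inr ⟨hEU.2.2 a b hab, mt (hgood a) ha, mt (hgood b) hb⟩

variable {R : STA I → STA I → Prop} (hdvd : ∀ a d : STA I, good (mul a d) → good a)
  (hR : ∀ x y, R x y → fiberCollapse good x y)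
include hdvd hR

lemma eq_of_mgen_of_good {a b : STA I} (ha : good a) (hab : mgen R a b) : b = a := by
  rcases mgen_le (fiberCollapse_equivalence good) (fiberCollapse_mult hdvd) hR hab
    with h | ⟨-, hna, -⟩
  · exact h.symm
  · exact absurd ha hna

lemma ghostFree_mgen_iff (hgood : ∀ a, good a → ¬ isGhost a)
    (hbad : ∀ z, ¬ good (tang z) → ∃ g, isGhost g ∧ mgen R (tang z) g) (a : STA I) :
    GhostFree (mgen R) a ↔ good a := by
  refine ⟨fun hfree => by_contra fun hna => ?_, fun ha ⟨g, hg, hag⟩ => ?_⟩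
  · cases a with
    | tang z => exact hfree (hbad z hna)
    | gh k => exact hfree ⟨gh k, trivial, mgen_refl _⟩
    | zero => exact hfree ⟨zero, trivial, mgen_refl _⟩
  · exact hgood a ha (eq_of_mgen_of_good hdvd hR ha hag ▸ hg)

end fiberCollapse

def powerGen (w : I →₀ ℕ) (a b : STA I) : Prop :=
  ∃ i : I, a = tang (Finsupp.single i (w i + 1)) ∧ b = gh (w i + 1)

def tildePowerGen (EU : STA I → STA I → Prop) (w : I →₀ ℕ) (a b : STA I) : Prop :=
  tilde EU a b ∨ powerGen w a b

def tangBelow (w : I →₀ ℕ) (a : STA I) : Prop :=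
  ∃ z : I →₀ ℕ, z ≤ w ∧ a = tang z

variable {w : I →₀ ℕ}

lemma tangBelow_of_mul {a d : STA I} (h : tangBelow w (mul a d)) : tangBelow w a := by
  obtain ⟨u, hu, hmul⟩ := h
  obtain ⟨z, z', rfl, -, rfl⟩ := exists_tang_of_mul_eq_tang hmul
  exact ⟨z, le_self_add.trans hu, rfl⟩

lemma setOf_tangBelow (w : I →₀ ℕ) :
    {a : STA I | tangBelow w a} = tang '' Set.Iic w := by
  ext a
  simp [tangBelow, eq_comm]

lemma fiberCollapse_of_powerGen {a b : STA I} (h : powerGen w a b) :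
    fiberCollapse (tangBelow w) a b := by
  obtain ⟨i, rfl, rfl⟩ := h
  refine Or.inr ⟨by simp only [nu, mul, deg_single], ?_, ?_⟩
  · rintro ⟨z, hz, hzeq⟩
    have := Finsupp.single_le_iff.1 (tang.inj hzeq ▸ hz)
    omega
  · rintro ⟨z, -, ⟨⟩⟩

lemma exists_ghost_mgen_of_not_le {R : STA I → STA I → Prop}
    (hR : ∀ x y, powerGen w x y → R x y) {z : I →₀ ℕ} (hz : ¬ z ≤ w) :
    ∃ g, isGhost g ∧ mgen R (tang z) g := by
  obtain ⟨i, hi⟩ := not_forall.1 (mt Finsupp.le_def.2 hz)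
  have hdvd : Finsupp.single i (w i + 1) + (z - Finsupp.single i (w i + 1)) = z :=
    add_tsub_cancel_of_le (Finsupp.single_le_iff.2 (by omega))
  have := mgen_mult _ _ (tang (z - Finsupp.single i (w i + 1))) (mgen_of (hR _ _ ⟨i, rfl, rfl⟩))
  rw [mul, hdvd] at this
  exact ⟨_, isGhost_mul (g := gh _) trivial _, this⟩

lemma ghostFree_mgen_powerGen_iff (w : I →₀ ℕ) (a : STA I) :
    GhostFree (mgen (powerGen w)) a ↔ tangBelow w a :=
  ghostFree_mgen_iff (fun _ _ => tangBelow_of_mul) (fun _ _ => fiberCollapse_of_powerGen)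
    (by rintro _ ⟨z, -, rfl⟩; exact id)
    (fun z hz => exists_ghost_mgen_of_not_le (fun _ _ => id) fun h => hz ⟨z, h, rfl⟩) a

lemma eq_of_mgen_powerGen_of_le {z : I →₀ ℕ} (hz : z ≤ w) {b : STA I}
    (hb : mgen (powerGen w) (tang z) b) : b = tang z :=
  eq_of_mgen_of_good (fun _ _ => tangBelow_of_mul) (fun _ _ => fiberCollapse_of_powerGen)
    ⟨z, hz, rfl⟩ hb

lemma ncard_ghostFree_mgen_powerGen (w : I →₀ ℕ) :
    {a : STA I | GhostFree (mgen (powerGen w)) a}.ncard = ∏ i ∈ w.support, (w i + 1) := by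
  classical
  have hset : {a : STA I | GhostFree (mgen (powerGen w)) a} = {a | tangBelow w a} :=
    Set.ext (ghostFree_mgen_powerGen_iff w)
  rw [hset, setOf_tangBelow,
    Set.ncard_image_of_injective _ tang_injective, ← Finset.coe_Iic, Set.ncard_coe_finset,
    Finsupp.card_Iic]
  simp only [Nat.card_Iic]

section tildePowerGen

variable {EU : STA I → STA I → Prop} (hEU : MFCE EU)
include hEU

lemma tangBelow_ghostFree_of_mul {a d : STA I}
    (h : tangBelow w (mul a d) ∧ GhostFree EU (mul a d)) : tangBelow w a ∧ GhostFree EU a :=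
  ⟨tangBelow_of_mul h.1, ghostFree_of_ghostFree_mul hEU.2.1 d h.2⟩

lemma fiberCollapse_of_tildePowerGen {a b : STA I} (h : tildePowerGen EU w a b) :
    fiberCollapse (fun a => tangBelow w a ∧ GhostFree EU a) a b := by
  rcases h with h | h
  · exact fiberCollapse_of_tilde hEU (fun _ => And.right) h
  · exact fiberCollapse_mono (fun _ => And.left) (fiberCollapse_of_powerGen h)

lemma ghostFree_mgen_tildePowerGen_iff (a : STA I) :
    GhostFree (mgen (tildePowerGen EU w)) a ↔ tangBelow w a ∧ GhostFree EU a := by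
  refine ghostFree_mgen_iff (fun _ _ => tangBelow_ghostFree_of_mul hEU)
    (fun _ _ => fiberCollapse_of_tildePowerGen hEU) (by rintro _ ⟨⟨z, -, rfl⟩, -⟩; exact id)
    (fun z hz => ?_) a
  by_cases hzw : z ≤ w
  · have hghost : ¬ GhostFree EU (tang z) := fun h => hz ⟨⟨z, hzw, rfl⟩, h⟩
    obtain ⟨g, hg, hzg⟩ := not_not.1 hghost
    exact ⟨g, hg, mgen_of (Or.inl (Or.inr ⟨hzg, hghost⟩))⟩
  · exact exists_ghost_mgen_of_not_le (fun _ _ => Or.inr) hzw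

lemma eq_of_mgen_tildePowerGen {a b : STA I} (ha : GhostFree (mgen (tildePowerGen EU w)) a)
    (hab : mgen (tildePowerGen EU w) a b) : b = a :=
  eq_of_mgen_of_good (fun _ _ => tangBelow_ghostFree_of_mul hEU)
    (fun _ _ => fiberCollapse_of_tildePowerGen hEU)
    ((ghostFree_mgen_tildePowerGen_iff hEU a).1 ha) hab

lemma finite_ghostFree_mgen_tildePowerGen :
    {a : STA I | GhostFree (mgen (tildePowerGen EU w)) a}.Finite := by
  classical
  refine (setOf_tangBelow w ▸ (Set.finite_Iic w).image tang).subset ?_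
  exact fun a ha => ((ghostFree_mgen_tildePowerGen_iff hEU a).1 ha).1

end tildePowerGen

end STA

/-- Let `E_U` be an MFCE-relation on `𝔄(I)`, `w` a monomial, and
`F_w = ⋁_i Eq(x_i^{w i + 1}, c^{w i + 1})`, `E_w = Ẽ_U ∨ F_w`.  Then: (1) the
ghost-free `F_w`-classes are exactly the singletons `{z}` for monomials `z ≤ w`,
and `A_w = 𝔄/F_w` has exactly `∏_{i ∈ supp w} (w i + 1)` tangible elements;
(2) the ghost-free `E_w`-classes are exactly the singletons `{z}` for monomials
`z ≤ w` whose `E_U`-class contains no ghost; in particular `U_w = 𝔄/E_w` has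
finitely many tangibles and unique tangible factorization. -/
theorem stmt17 {I : Type} (EU : STA I → STA I → Prop) (hEU : STA.MFCE EU)
    (w : I →₀ ℕ)
    (Fw : STA I → STA I → Prop)
    (hFw : Fw = STA.mgen (fun a b : STA I => ∃ i : I,
      a = STA.tang (Finsupp.single i (w i + 1)) ∧ b = STA.gh (w i + 1)))
    (Ew : STA I → STA I → Prop)
    (hEw : Ew = STA.mgen (fun a b : STA I => STA.tilde EU a b ∨ ∃ i : I,
      a = STA.tang (Finsupp.single i (w i + 1)) ∧ b = STA.gh (w i + 1))) :
    ((∀ a : STA I, STA.GhostFree Fw a ↔ ∃ z : I →₀ ℕ, z ≤ w ∧ a = STA.tang z) ∧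
     (∀ z : I →₀ ℕ, z ≤ w → ∀ b : STA I, Fw (STA.tang z) b → b = STA.tang z) ∧
     {a : STA I | STA.GhostFree Fw a}.ncard = ∏ i ∈ w.support, (w i + 1)) ∧
    ((∀ a : STA I, STA.GhostFree Ew a ↔
        ∃ z : I →₀ ℕ, z ≤ w ∧ a = STA.tang z ∧ STA.GhostFree EU (STA.tang z)) ∧
     (∀ a : STA I, STA.GhostFree Ew a → ∀ b : STA I, Ew a b → b = a) ∧
     {a : STA I | STA.GhostFree Ew a}.Finite) := by
  subst hFw hEw
  have hEw_iff : ∀ a, STA.GhostFree (STA.mgen (STA.tildePowerGen EU w)) a ↔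
      ∃ z : I →₀ ℕ, z ≤ w ∧ a = STA.tang z ∧ STA.GhostFree EU (STA.tang z) := fun a =>
    (STA.ghostFree_mgen_tildePowerGen_iff hEU a).trans
      ⟨fun ⟨⟨z, hz, ha⟩, hfree⟩ => ⟨z, hz, ha, ha ▸ hfree⟩,
        fun ⟨z, hz, ha, hfree⟩ => ⟨⟨z, hz, ha⟩, ha ▸ hfree⟩⟩
  exact ⟨⟨STA.ghostFree_mgen_powerGen_iff w, fun _ hz _ => STA.eq_of_mgen_powerGen_of_le hz,
      STA.ncard_ghostFree_mgen_powerGen w⟩,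
    ⟨hEw_iff, fun _ ha _ => STA.eq_of_mgen_tildePowerGen hEU ha,
      STA.finite_ghostFree_mgen_tildePowerGen hEU⟩⟩
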